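/- Let p be a prime, K a complete nonarchimedean field extension of ℚ_p with absolute value |·| extending the p-adic absolute value, and 0 ≤ r < 1. Define B_r = {x ∈ K : ∃ a ∈ ℤ_p, |x − a| ≤ r}. Then for every matrix γ = (a b; c d) ∈ GL₂(ℤ_p) with c ∈ pℤ_p and every z ∈ B_r, one has |cz + d| = 1 (so cz + d is invertible in K) and (az + b)/(cz + d) ∈ B_r. -/

import Mathlib

/-- Ultrametric: if `v y < v x` then `v (x + y) = v x`. -/
lemma aux_add_eq_of_lt {K : Type*} [Field K] (v : AbsoluteValue K ℝ)
    (hna : IsNonarchimedean v) {x y : K} (h : v y < v x) : v (x + y) = v x := by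
  have h1 : v (x + y) ≤ max (v x) (v y) := hna x y
  have h2 : v x ≤ max (v (x + y)) (v y) := by
    have := hna (x + y) (-y)
    simpa using this
  rcases le_or_gt (v x) (v (x + y)) with h3 | h3
  · exact le_antisymm (h1.trans (by simp [le_of_lt h])) h3
  · exact absurd h2 (by simp [not_le, h3, h])

/-- Let `K` be a nonarchimedean field extension of `ℚ_p` with absolute value `v`
extending the `p`-adic absolute value, `0 ≤ r < 1`, and `B_r` the union of the
closed balls of radius `r` around points of `ℤ_p`.  For every
`γ = (a b; c d) ∈ GL₂(ℤ_p)` with `c ∈ pℤ_p` and every `z ∈ B_r`, one has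
`|cz + d| = 1` (so `cz + d` is invertible in `K`) and `(az+b)/(cz+d) ∈ B_r`. -/
theorem stmt0 (p : ℕ) [Fact p.Prime] {K : Type*} [Field K]
    (ι : ℤ_[p] →+* K) (v : AbsoluteValue K ℝ)
    (hna : IsNonarchimedean v)
    (hext : ∀ a : ℤ_[p], v (ι a) = ‖a‖)
    (r : ℝ) (hr0 : 0 ≤ r) (hr1 : r < 1)
    (γ : (Matrix (Fin 2) (Fin 2) ℤ_[p])ˣ)
    (hc : (γ : Matrix (Fin 2) (Fin 2) ℤ_[p]) 1 0 ∈ Ideal.span {(p : ℤ_[p])})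
    (z : K) (hz : ∃ a : ℤ_[p], v (z - ι a) ≤ r) :
    v (ι ((γ : Matrix (Fin 2) (Fin 2) ℤ_[p]) 1 0) * z
        + ι ((γ : Matrix (Fin 2) (Fin 2) ℤ_[p]) 1 1)) = 1 ∧
    (ι ((γ : Matrix (Fin 2) (Fin 2) ℤ_[p]) 1 0) * z
        + ι ((γ : Matrix (Fin 2) (Fin 2) ℤ_[p]) 1 1)) ≠ 0 ∧
    ∃ a : ℤ_[p],
      v ((ι ((γ : Matrix (Fin 2) (Fin 2) ℤ_[p]) 0 0) * z
            + ι ((γ : Matrix (Fin 2) (Fin 2) ℤ_[p]) 0 1)) /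
          (ι ((γ : Matrix (Fin 2) (Fin 2) ℤ_[p]) 1 0) * z
            + ι ((γ : Matrix (Fin 2) (Fin 2) ℤ_[p]) 1 1)) - ι a) ≤ r := by
  obtain ⟨a₀, ha₀⟩ := hz
  set M := (γ : Matrix (Fin 2) (Fin 2) ℤ_[p]) with hM
  set A := M 0 0
  set B := M 0 1
  set C := M 1 0
  set Dd := M 1 1
  -- determinant is a unit
  have hdetu : IsUnit M.det := (Matrix.isUnit_iff_isUnit_det M).mp γ.isUnit
  have hdet1 : ‖M.det‖ = 1 := PadicInt.isUnit_iff.mp hdetu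
  have hC : ‖C‖ < 1 := (PadicInt.norm_lt_one_iff_dvd C).mpr (Ideal.mem_span_singleton.mp hc)
  have hdet_eq : M.det = A * Dd - B * C := Matrix.det_fin_two M
  -- ‖Dd‖ = 1
  have hBC : ‖B * C‖ < 1 := by
    rw [norm_mul]
    calc ‖B‖ * ‖C‖ ≤ 1 * ‖C‖ := by
          exact mul_le_mul_of_nonneg_right (PadicInt.norm_le_one B) (norm_nonneg C)
      _ = ‖C‖ := one_mul _
      _ < 1 := hC
  have hAD : ‖A * Dd‖ = 1 := by
    have : A * Dd = M.det + B * C := by rw [hdet_eq]; ring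
    have h1 : v (ι (A * Dd)) = v (ι M.det) := by
      rw [this, map_add]
      exact aux_add_eq_of_lt v hna (by rw [hext, hext, hdet1]; exact hBC)
    rw [← hext, h1, hext, hdet1]
  have hD1 : ‖Dd‖ = 1 := by
    rw [norm_mul] at hAD
    have hA1 : ‖A‖ ≤ 1 := PadicInt.norm_le_one A
    have hD1' : ‖Dd‖ ≤ 1 := PadicInt.norm_le_one Dd
    nlinarith [norm_nonneg A, norm_nonneg Dd]
  -- u = C * a₀ + Dd is a unit
  have hu1 : ‖C * a₀ + Dd‖ = 1 := by
    have h1 : v (ι (C * a₀ + Dd)) = v (ι Dd) := by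
      rw [map_add, add_comm]
      refine aux_add_eq_of_lt v hna ?_
      rw [hext, hext, hD1, norm_mul]
      calc ‖C‖ * ‖a₀‖ ≤ ‖C‖ * 1 :=
            mul_le_mul_of_nonneg_left (PadicInt.norm_le_one a₀) (norm_nonneg C)
        _ = ‖C‖ := mul_one _
        _ < 1 := hC
    rw [← hext, h1, hext, hD1]
  set u := C * a₀ + Dd with hu_def
  have huu : IsUnit u := PadicInt.isUnit_iff.mpr hu1
  have hvu : v (ι u) = 1 := by rw [hext, hu1]
  -- v (C z + Dd) = 1
  have hDval : v (ι C * z + ι Dd) = 1 := by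
    have heq : ι C * z + ι Dd = ι u + ι C * (z - ι a₀) := by
      rw [hu_def, map_add, map_mul]; ring
    rw [heq]
    rw [aux_add_eq_of_lt v hna ?_, hvu]
    · rw [v.map_mul, hvu]
      calc v (ι C) * v (z - ι a₀) ≤ 1 * r := by
            refine mul_le_mul ?_ ha₀ (v.nonneg _) zero_le_one
            rw [hext]; exact (PadicInt.norm_le_one C)
        _ = r := one_mul r
        _ < 1 := hr1
  refine ⟨hDval, ?_, ?_⟩
  · intro h
    rw [h] at hDval
    simp at hDval
  -- the image point
  · refine ⟨(A * a₀ + B) * ↑huu.unit⁻¹, ?_⟩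
    have hinv : (↑huu.unit⁻¹ : ℤ_[p]) * u = 1 := by
      have h := huu.unit.inv_mul
      rwa [huu.unit_spec] at h
    have hkey : ((A * a₀ + B) * ↑huu.unit⁻¹) * u = A * a₀ + B := by
      rw [mul_assoc, hinv, mul_one]
    set a' : ℤ_[p] := (A * a₀ + B) * ↑huu.unit⁻¹ with ha'
    have hmap : ι a' * ι u = ι A * ι a₀ + ι B := by
      rw [← map_mul, hkey, map_add, map_mul]
    have hD0 : (ι C * z + ι Dd) ≠ 0 := by
      intro h; rw [h] at hDval; simp at hDval
    -- main algebraic identity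
    have hiu : ι u = ι C * ι a₀ + ι Dd := by rw [hu_def, map_add, map_mul]
    have hidet : ι M.det = ι A * ι Dd - ι B * ι C := by
      rw [hdet_eq, map_sub, map_mul, map_mul]
    have hident : ((ι A * z + ι B) - ι a' * (ι C * z + ι Dd)) * ι u
        = ι M.det * (z - ι a₀) := by
      have hmap' : ι a' * (ι C * ι a₀ + ι Dd) = ι A * ι a₀ + ι B := by
        rw [← hiu]; exact hmap
      rw [hidet, hiu]
      linear_combination (-(ι C * z + ι Dd)) * hmap'
    have hnum : v ((ι A * z + ι B) - ι a' * (ι C * z + ι Dd)) = v (z - ι a₀) := by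
      have := congrArg v hident
      rw [v.map_mul, v.map_mul, hext, hu1, hext, hdet1, mul_one, one_mul] at this
      exact this
    have hquot : (ι A * z + ι B) / (ι C * z + ι Dd) - ι a'
        = ((ι A * z + ι B) - ι a' * (ι C * z + ι Dd)) / (ι C * z + ι Dd) := by
      rw [sub_div, mul_div_cancel_right₀ _ hD0]
    rw [hquot, map_div₀ v, hnum, hDval, div_one]
    exact ha₀
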